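/- arXiv:math/9912126 — 5 statements merged into one kernel-verified Lean document; each statement's English description precedes it below -/
import Mathlib

section
/- For a finite poset P of cardinality n, define a_k as the maximal cardinality of a union of k antichains, and μ_k = a_k - a_{k-1}. Then the sequence (μ_1, μ_2, ...) is weakly decreasing. -/
open Finset

/-- `cMax α k` is the maximal cardinality of a union of `k` pairwise disjoint chains
in the finite poset `α`. -/
noncomputable def cMax (α : Type*) [PartialOrder α] [Fintype α] [DecidableEq α] (k : ℕ) : ℕ :=
  sSup {n : ℕ | ∃ f : Fin k → Finset α,
    (∀ i, IsChain (· ≤ ·) (↑(f i) : Set α)) ∧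
    Pairwise (Function.onFun Disjoint f) ∧
    n = (Finset.univ.biUnion f).card}

/-- `aMax α k` is the maximal cardinality of a union of `k` pairwise disjoint antichains
in the finite poset `α`. -/
noncomputable def aMax (α : Type*) [PartialOrder α] [Fintype α] [DecidableEq α] (k : ℕ) : ℕ :=
  sSup {n : ℕ | ∃ f : Fin k → Finset α,
    (∀ i, IsAntichain (· ≤ ·) (↑(f i) : Set α)) ∧
    Pairwise (Function.onFun Disjoint f) ∧
    n = (Finset.univ.biUnion f).card}

/-- The `k`-th row length of the Greene shape `λ(α)`. -/
noncomputable def lam (α : Type*) [PartialOrder α] [Fintype α] [DecidableEq α] (k : ℕ) : ℕ :=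
  cMax α k - cMax α (k - 1)

/-- The `k`-th column length of the Greene shape, `μ_k = a_k - a_{k-1}`. -/
noncomputable def mu (α : Type*) [PartialOrder α] [Fintype α] [DecidableEq α] (k : ℕ) : ℕ :=
  aMax α k - aMax α (k - 1)


section GreeneAux

set_option linter.unusedSectionVars false

variable {α : Type*} [PartialOrder α] [Fintype α] [DecidableEq α]

/-- Strict lexicographic-type relation on `α × Bool` (`false` below `true`). -/
def lrel : α × Bool → α × Bool → Prop :=
  fun r s => r.1 < s.1 ∨ (r.1 = s.1 ∧ r.2 = false ∧ s.2 = true)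

lemma lrel_irrefl (r : α × Bool) : ¬ lrel r r := by
  rintro (h | ⟨-, h1, h2⟩)
  · exact lt_irrefl _ h
  · rw [h1] at h2; cases h2

lemma lrel_trans {r s t : α × Bool} (h1 : lrel r s) (h2 : lrel s t) : lrel r t := by
  rcases h1 with h1 | ⟨e1, b1, b2⟩ <;> rcases h2 with h2 | ⟨e2, c1, c2⟩
  · exact Or.inl (h1.trans h2)
  · exact Or.inl (lt_of_lt_of_le h1 (le_of_eq e2))
  · exact Or.inl (lt_of_le_of_lt (le_of_eq e1) h2)
  · rw [b2] at c1; cases c1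

lemma lrel_asymm {r s : α × Bool} (h1 : lrel r s) (h2 : lrel s r) : False :=
  lrel_irrefl r (lrel_trans h1 h2)

/-- elements strictly below `(x, true)` are `(x, false)` or below `(x, false)`. -/
lemma lrel_below_true {x : α} {w : α × Bool} (h : lrel w (x, true)) :
    w = (x, false) ∨ lrel w (x, false) := by
  rcases h with h | ⟨e, b, -⟩
  · exact Or.inr (Or.inl h)
  · exact Or.inl (Prod.ext_iff.mpr ⟨e, b⟩)

/-- A chain (w.r.t. `lrel`) inside `R` with top element `r`. -/
def EndChain (R : Finset (α × Bool)) (r : α × Bool) (c : Finset (α × Bool)) : Prop :=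
  c ⊆ R ∧ r ∈ c ∧ (∀ x ∈ c, x = r ∨ lrel x r) ∧
    (∀ x ∈ c, ∀ y ∈ c, x ≠ y → lrel x y ∨ lrel y x)

open Classical in
/-- height of `r` inside `R` : maximal cardinality of an `lrel`-chain in `R` ending at `r`. -/
noncomputable def ht (R : Finset (α × Bool)) (r : α × Bool) : ℕ :=
  (R.powerset.filter (EndChain R r)).sup Finset.card

lemma endChain_singleton {R : Finset (α × Bool)} {r : α × Bool} (hr : r ∈ R) :
    EndChain R r {r} := by
  refine ⟨by simpa using hr, mem_singleton_self r, ?_, ?_⟩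
  · intro x hx; left; simpa using hx
  · intro x hx y hy hxy
    simp only [mem_singleton] at hx hy
    exact absurd (hx.trans hy.symm) hxy

lemma one_le_ht {R : Finset (α × Bool)} {r : α × Bool} (hr : r ∈ R) : 1 ≤ ht R r := by
  classical
  have h1 : ({r} : Finset (α × Bool)) ∈ R.powerset.filter (EndChain R r) := by
    simp only [mem_filter, mem_powerset]
    exact ⟨by simpa using hr, endChain_singleton hr⟩
  calc 1 = ({r} : Finset (α × Bool)).card := by simp
  _ ≤ _ := Finset.le_sup h1

lemma exists_ht_chain {R : Finset (α × Bool)} {r : α × Bool} (hr : r ∈ R) :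
    ∃ c, EndChain R r c ∧ c.card = ht R r := by
  classical
  have hne : (R.powerset.filter (EndChain R r)).Nonempty := by
    refine ⟨{r}, ?_⟩
    simp only [mem_filter, mem_powerset]
    exact ⟨by simpa using hr, endChain_singleton hr⟩
  obtain ⟨c, hc, hcard⟩ := Finset.exists_mem_eq_sup _ hne Finset.card
  simp only [mem_filter, mem_powerset] at hc
  exact ⟨c, hc.2, hcard.symm⟩

lemma ht_le {R : Finset (α × Bool)} {r : α × Bool} {N : ℕ}
    (h : ∀ c : Finset (α × Bool), c ⊆ R →
      (∀ x ∈ c, ∀ y ∈ c, x ≠ y → lrel x y ∨ lrel y x) → c.card ≤ N) :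
    ht R r ≤ N := by
  classical
  refine Finset.sup_le ?_
  intro c hc
  simp only [mem_filter, mem_powerset] at hc
  exact h c hc.1 hc.2.2.2.2

lemma ht_lt_ht {R : Finset (α × Bool)} {r s : α × Bool} (hr : r ∈ R) (hs : s ∈ R)
    (hrs : lrel r s) : ht R r < ht R s := by
  classical
  obtain ⟨c, ⟨hcR, hrc, htop, hchain⟩, hcard⟩ := exists_ht_chain hr
  have hsnc : s ∉ c := by
    intro hsc
    rcases htop s hsc with h | h
    · exact lrel_irrefl r (h ▸ hrs)
    · exact lrel_asymm hrs h
  have hmem : insert s c ∈ R.powerset.filter (EndChain R s) := by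
    simp only [mem_filter, mem_powerset]
    have hsub : insert s c ⊆ R := by
      intro x hx; rcases mem_insert.mp hx with rfl | hx
      · exact hs
      · exact hcR hx
    have htop' : ∀ w ∈ insert s c, w = s ∨ lrel w s := by
      intro w hw
      rcases mem_insert.mp hw with rfl | hw
      · exact Or.inl rfl
      · rcases htop w hw with rfl | h
        · exact Or.inr hrs
        · exact Or.inr (lrel_trans h hrs)
    refine ⟨hsub, hsub, mem_insert_self s c, htop', ?_⟩
    intro a ha b hb hab
    rcases htop' a ha with rfl | ha' <;> rcases htop' b hb with rfl | hb'
    · exact absurd rfl hab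
    · exact Or.inr hb'
    · exact Or.inl ha'
    · rcases mem_insert.mp ha with rfl | ha2
      · exact absurd ha' (lrel_irrefl _)
      · rcases mem_insert.mp hb with rfl | hb2
        · exact absurd hb' (lrel_irrefl _)
        · exact hchain a ha2 b hb2 hab
  have : (insert s c).card ≤ ht R s := Finset.le_sup hmem
  rw [Finset.card_insert_of_notMem hsnc, hcard] at this
  omega

/-- For a doubled element, the height of the upper copy is exactly one more. -/
lemma ht_pair {R : Finset (α × Bool)} {x : α}
    (hf : (x, false) ∈ R) (ht' : (x, true) ∈ R) :
    ht R (x, true) = ht R (x, false) + 1 := by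
  classical
  have hlt : ht R (x, false) < ht R (x, true) :=
    ht_lt_ht hf ht' (Or.inr ⟨rfl, rfl, rfl⟩)
  obtain ⟨c, ⟨hcR, hrc, htop, hchain⟩, hcard⟩ := exists_ht_chain ht'
  set c' : Finset (α × Bool) := insert (x, false) (c.erase (x, true)) with hc'
  have hmemc' : ∀ w ∈ c', w = (x, false) ∨ lrel w (x, false) := by
    intro w hw
    rcases mem_insert.mp hw with rfl | hw
    · exact Or.inl rfl
    · have hwc := mem_of_mem_erase hw
      have hwne := ne_of_mem_erase hw
      rcases htop w hwc with rfl | h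
      · exact absurd rfl hwne
      · exact lrel_below_true h
  have hmem : c' ∈ R.powerset.filter (EndChain R (x, false)) := by
    simp only [mem_filter, mem_powerset]
    have hsub : c' ⊆ R := by
      intro w hw; rcases mem_insert.mp hw with rfl | hw
      · exact hf
      · exact hcR (mem_of_mem_erase hw)
    refine ⟨hsub, hsub, mem_insert_self _ _, hmemc', ?_⟩
    · intro a ha b hb hab
      rcases hmemc' a ha with rfl | ha' <;> rcases hmemc' b hb with rfl | hb'
      · exact absurd rfl hab
      · exact Or.inr hb'
      · exact Or.inl ha'
      · rcases mem_insert.mp ha with rfl | ha2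
        · exact absurd ha' (lrel_irrefl _)
        · rcases mem_insert.mp hb with rfl | hb2
          · exact absurd hb' (lrel_irrefl _)
          · exact hchain a (mem_of_mem_erase ha2) b (mem_of_mem_erase hb2) hab
  have hle : c'.card ≤ ht R (x, false) := Finset.le_sup hmem
  have hcerase : (c.erase (x, true)).card = c.card - 1 :=
    Finset.card_erase_of_mem hrc
  have hcpos : 1 ≤ c.card := Finset.card_pos.mpr ⟨_, hrc⟩
  by_cases hxf : (x, false) ∈ c.erase (x, true)
  · have : c'.card = c.card - 1 := by
      rw [hc', Finset.insert_eq_self.mpr hxf, hcerase]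
    omega
  · have : c'.card = c.card - 1 + 1 := by
      rw [hc', Finset.card_insert_of_notMem hxf, hcerase]
    omega

end GreeneAux

section AMaxFacts

set_option linter.unusedSectionVars false

variable (α : Type*) [PartialOrder α] [Fintype α] [DecidableEq α]

lemma aMax_set_nonempty (k : ℕ) : {n : ℕ | ∃ f : Fin k → Finset α,
    (∀ i, IsAntichain (· ≤ ·) (↑(f i) : Set α)) ∧
    Pairwise (Function.onFun Disjoint f) ∧
    n = (Finset.univ.biUnion f).card}.Nonempty := by
  refine ⟨0, fun _ => ∅, ?_, ?_, ?_⟩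
  · intro i
    rw [Finset.coe_empty]
    exact Set.pairwise_empty _
  · intro i j hij
    exact Finset.disjoint_empty_left _
  · rw [eq_comm, Finset.card_eq_zero]
    ext x
    simp

lemma aMax_set_bdd (k : ℕ) : BddAbove {n : ℕ | ∃ f : Fin k → Finset α,
    (∀ i, IsAntichain (· ≤ ·) (↑(f i) : Set α)) ∧
    Pairwise (Function.onFun Disjoint f) ∧
    n = (Finset.univ.biUnion f).card} := by
  refine ⟨Fintype.card α, ?_⟩
  rintro n ⟨f, -, -, rfl⟩
  exact le_trans (Finset.card_le_univ _) (le_of_eq Finset.card_univ)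

lemma aMax_exists (k : ℕ) : ∃ f : Fin k → Finset α,
    (∀ i, IsAntichain (· ≤ ·) (↑(f i) : Set α)) ∧
    Pairwise (Function.onFun Disjoint f) ∧
    aMax α k = (Finset.univ.biUnion f).card := by
  have h : aMax α k ∈ {n : ℕ | ∃ f : Fin k → Finset α,
      (∀ i, IsAntichain (· ≤ ·) (↑(f i) : Set α)) ∧
      Pairwise (Function.onFun Disjoint f) ∧
      n = (Finset.univ.biUnion f).card} := by
    rw [aMax]
    exact Nat.sSup_mem (aMax_set_nonempty α k) (aMax_set_bdd α k)
  exact h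

lemma le_aMax (k : ℕ) (f : Fin k → Finset α)
    (h1 : ∀ i, IsAntichain (· ≤ ·) (↑(f i) : Set α))
    (h2 : Pairwise (Function.onFun Disjoint f)) :
    (Finset.univ.biUnion f).card ≤ aMax α k := by
  rw [aMax]
  exact le_csSup (aMax_set_bdd α k) ⟨f, h1, h2, rfl⟩

lemma aMax_le_succ (k : ℕ) : aMax α k ≤ aMax α (k + 1) := by
  obtain ⟨f, h1, h2, h3⟩ := aMax_exists α k
  set g : Fin (k + 1) → Finset α := Fin.cases ∅ f with hg
  have hg1 : ∀ i, IsAntichain (· ≤ ·) (↑(g i) : Set α) := by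
    intro i
    induction i using Fin.cases with
    | zero => rw [hg]; simp only [Fin.cases_zero]; rw [Finset.coe_empty]; exact Set.pairwise_empty _
    | succ i => rw [hg]; simp only [Fin.cases_succ]; exact h1 i
  have hg2 : Pairwise (Function.onFun Disjoint g) := by
    intro i j hij
    show Disjoint (g i) (g j)
    induction i using Fin.cases with
    | zero =>
      rw [hg]
      simp only [Fin.cases_zero]
      exact Finset.disjoint_empty_left _
    | succ i =>
      induction j using Fin.cases with
      | zero =>
        rw [hg]
        simp only [Fin.cases_zero, Fin.cases_succ]
        exact Finset.disjoint_empty_right _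
      | succ j =>
        rw [hg]
        simp only [Fin.cases_succ]
        exact h2 (fun h => hij (by rw [h]))
  have hgu : Finset.univ.biUnion g = Finset.univ.biUnion f := by
    ext x
    simp only [Finset.mem_biUnion, Finset.mem_univ, true_and]
    constructor
    · rintro ⟨i, hi⟩
      induction i using Fin.cases with
      | zero => rw [hg] at hi; simp at hi
      | succ i => exact ⟨i, by rw [hg] at hi; simpa using hi⟩
    · rintro ⟨i, hi⟩
      exact ⟨i.succ, by rw [hg]; simpa using hi⟩
  rw [h3, ← hgu]
  exact le_aMax α (k + 1) g hg1 hg2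

/-- any subset of a union of `m` antichains which is totally ordered has at most `m` elements -/
lemma family_bound {m : ℕ} (f : Fin m → Finset α)
    (hf : ∀ i, IsAntichain (· ≤ ·) (↑(f i) : Set α))
    (t : Finset α) (hts : t ⊆ Finset.univ.biUnion f)
    (hcomp : ∀ x ∈ t, ∀ y ∈ t, x ≠ y → x < y ∨ y < x) :
    t.card ≤ m := by
  classical
  have h := Finset.card_le_card_of_injOn
    (s := t.attach) (t := (Finset.univ : Finset (Fin m)))
    (fun x => (Finset.mem_biUnion.mp (hts x.2)).choose)
    (fun a _ => Finset.mem_univ _) ?_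
  · rwa [Finset.card_attach, Finset.card_univ, Fintype.card_fin] at h
  · intro a _ b _ heq
    by_contra hab
    have hane : (a : α) ≠ (b : α) := fun h => hab (Subtype.ext h)
    have ha' := (Finset.mem_biUnion.mp (hts a.2)).choose_spec.2
    have hb' := (Finset.mem_biUnion.mp (hts b.2)).choose_spec.2
    have heq' : (Finset.mem_biUnion.mp (hts a.2)).choose
        = (Finset.mem_biUnion.mp (hts b.2)).choose := heq
    rw [heq'] at ha'
    rcases hcomp a a.2 b b.2 hane with h | h
    · exact (hf _) (Finset.mem_coe.mpr ha') (Finset.mem_coe.mpr hb') hane h.le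
    · exact (hf _) (Finset.mem_coe.mpr hb') (Finset.mem_coe.mpr ha') hane.symm h.le

end AMaxFacts

section Key

set_option linter.unusedSectionVars false
set_option maxHeartbeats 1000000

variable (α : Type*) [PartialOrder α] [Fintype α] [DecidableEq α]

lemma aMax_concave (j : ℕ) : aMax α (j + 2) + aMax α j ≤ 2 * aMax α (j + 1) := by
  classical
  obtain ⟨fA, hA1, hA2, hA3⟩ := aMax_exists α (j + 2)
  obtain ⟨fB, hB1, hB2, hB3⟩ := aMax_exists α j
  set A := Finset.univ.biUnion fA with hA
  set B := Finset.univ.biUnion fB with hB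
  set R : Finset (α × Bool) :=
    A.image (fun x => (x, false)) ∪ B.image (fun x => (x, true)) with hR
  have memRf : ∀ x : α, ((x, false) ∈ R ↔ x ∈ A) := by
    intro x
    rw [hR]
    simp
  have memRt : ∀ x : α, ((x, true) ∈ R ↔ x ∈ B) := by
    intro x
    rw [hR]
    simp
  -- every lrel-chain in R has at most 2(j+1) elements
  have chainbound : ∀ c : Finset (α × Bool), c ⊆ R →
      (∀ x ∈ c, ∀ y ∈ c, x ≠ y → lrel x y ∨ lrel y x) → c.card ≤ 2 * (j + 1) := by
    intro c hcR hchain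
    have hsplit := Finset.card_filter_add_card_filter_not
      (s := c) (p := fun r : α × Bool => r.2 = false)
    set cf := c.filter (fun r : α × Bool => r.2 = false) with hcf
    set ct := c.filter (fun r : α × Bool => ¬ r.2 = false) with hct
    have hcfinj : Set.InjOn Prod.fst (↑cf : Set (α × Bool)) := by
      intro r hr s hs hfst
      have hr2 : r.2 = false := (Finset.mem_filter.mp (Finset.mem_coe.mp hr)).2
      have hs2 : s.2 = false := (Finset.mem_filter.mp (Finset.mem_coe.mp hs)).2
      exact Prod.ext_iff.mpr ⟨hfst, hr2.trans hs2.symm⟩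
    have hctinj : Set.InjOn Prod.fst (↑ct : Set (α × Bool)) := by
      intro r hr s hs hfst
      have hr2 : r.2 = true := by
        have := (Finset.mem_filter.mp (Finset.mem_coe.mp hr)).2
        revert this; cases r.2 <;> simp
      have hs2 : s.2 = true := by
        have := (Finset.mem_filter.mp (Finset.mem_coe.mp hs)).2
        revert this; cases s.2 <;> simp
      exact Prod.ext_iff.mpr ⟨hfst, hr2.trans hs2.symm⟩
    have hcfsub : cf.image Prod.fst ⊆ A := by
      intro x hx
      obtain ⟨r, hr, rfl⟩ := Finset.mem_image.mp hx
      have hr2 : r.2 = false := (Finset.mem_filter.mp hr).2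
      have hrR : r ∈ R := hcR (Finset.mem_filter.mp hr).1
      have : (r.1, false) ∈ R := by rw [← hr2, Prod.mk.eta]; exact hrR
      exact (memRf r.1).mp this
    have hctsub : ct.image Prod.fst ⊆ B := by
      intro x hx
      obtain ⟨r, hr, rfl⟩ := Finset.mem_image.mp hx
      have hr2 : r.2 = true := by
        have := (Finset.mem_filter.mp hr).2
        revert this; cases r.2 <;> simp
      have hrR : r ∈ R := hcR (Finset.mem_filter.mp hr).1
      have : (r.1, true) ∈ R := by rw [← hr2, Prod.mk.eta]; exact hrR
      exact (memRt r.1).mp this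
    have hcfcomp : ∀ x ∈ cf.image Prod.fst, ∀ y ∈ cf.image Prod.fst,
        x ≠ y → x < y ∨ y < x := by
      intro x hx y hy hxy
      obtain ⟨r, hr, rfl⟩ := Finset.mem_image.mp hx
      obtain ⟨s, hs, rfl⟩ := Finset.mem_image.mp hy
      have hrs : r ≠ s := fun h => hxy (by rw [h])
      have h2r : r.2 = false := (Finset.mem_filter.mp hr).2
      have h2s : s.2 = false := (Finset.mem_filter.mp hs).2
      rcases hchain r (Finset.mem_filter.mp hr).1 s (Finset.mem_filter.mp hs).1 hrs with h | h
      · rcases h with h | ⟨-, -, h⟩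
        · exact Or.inl h
        · rw [h2s] at h; cases h
      · rcases h with h | ⟨-, -, h⟩
        · exact Or.inr h
        · rw [h2r] at h; cases h
    have hctcomp : ∀ x ∈ ct.image Prod.fst, ∀ y ∈ ct.image Prod.fst,
        x ≠ y → x < y ∨ y < x := by
      intro x hx y hy hxy
      obtain ⟨r, hr, rfl⟩ := Finset.mem_image.mp hx
      obtain ⟨s, hs, rfl⟩ := Finset.mem_image.mp hy
      have hrs : r ≠ s := fun h => hxy (by rw [h])
      have h2r : r.2 ≠ false := (Finset.mem_filter.mp hr).2
      have h2s : s.2 ≠ false := (Finset.mem_filter.mp hs).2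
      rcases hchain r (Finset.mem_filter.mp hr).1 s (Finset.mem_filter.mp hs).1 hrs with h | h
      · rcases h with h | ⟨-, h, -⟩
        · exact Or.inl h
        · exact absurd h h2r
      · rcases h with h | ⟨-, h, -⟩
        · exact Or.inr h
        · exact absurd h h2s
    have hcfcard : cf.card ≤ j + 2 := by
      have hb := family_bound α fA hA1 (cf.image Prod.fst) hcfsub hcfcomp
      rwa [Finset.card_image_of_injOn hcfinj] at hb
    have hctcard : ct.card ≤ j := by
      have hb := family_bound α fB hB1 (ct.image Prod.fst) hctsub hctcomp
      rwa [Finset.card_image_of_injOn hctinj] at hb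
    omega
  have ht1 : ∀ r ∈ R, 1 ≤ ht R r := fun r hr => one_le_ht hr
  have ht2 : ∀ r ∈ R, ht R r ≤ 2 * (j + 1) :=
    fun r _ => ht_le (fun c h1 h2 => chainbound c h1 h2)
  set L : ℕ → Finset (α × Bool) := fun m => R.filter (fun r => ht R r = m) with hL
  -- two copies of the same element have heights differing by exactly one
  have copy : ∀ (x : α) (r s : α × Bool), r ∈ R → s ∈ R → r.1 = x → s.1 = x → r ≠ s →
      ht R s = ht R r + 1 ∨ ht R r = ht R s + 1 := by
    intro x r s hrR hsR hr1 hs1 hrs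
    have hbne : r.2 ≠ s.2 := by
      intro h
      exact hrs (Prod.ext_iff.mpr ⟨hr1.trans hs1.symm, h⟩)
    cases hr2 : r.2 <;> cases hs2 : s.2
    · rw [hr2, hs2] at hbne; exact absurd rfl hbne
    · left
      have hfR : (x, false) ∈ R := by rw [← hr1, ← hr2, Prod.mk.eta]; exact hrR
      have htR' : (x, true) ∈ R := by rw [← hs1, ← hs2, Prod.mk.eta]; exact hsR
      have hp := ht_pair hfR htR'
      rw [show s = (x, true) from Prod.ext_iff.mpr ⟨hs1, hs2⟩,
          show r = (x, false) from Prod.ext_iff.mpr ⟨hr1, hr2⟩]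
      exact hp
    · right
      have hfR : (x, false) ∈ R := by rw [← hs1, ← hs2, Prod.mk.eta]; exact hsR
      have htR' : (x, true) ∈ R := by rw [← hr1, ← hr2, Prod.mk.eta]; exact hrR
      have hp := ht_pair hfR htR'
      rw [show r = (x, true) from Prod.ext_iff.mpr ⟨hr1, hr2⟩,
          show s = (x, false) from Prod.ext_iff.mpr ⟨hs1, hs2⟩]
      exact hp
    · rw [hr2, hs2] at hbne; exact absurd rfl hbne
  have levinj : ∀ m : ℕ, Set.InjOn Prod.fst (↑(L m) : Set (α × Bool)) := by
    intro m r hr s hs hfst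
    by_contra hrs
    have hrm := Finset.mem_filter.mp (Finset.mem_coe.mp hr)
    have hsm := Finset.mem_filter.mp (Finset.mem_coe.mp hs)
    rcases copy r.1 r s hrm.1 hsm.1 rfl hfst.symm hrs with h | h <;>
      rw [hrm.2, hsm.2] at h <;> omega
  have levAC : ∀ m : ℕ, IsAntichain (· ≤ ·) (↑((L m).image Prod.fst) : Set α) := by
    intro m x hx y hy hxy hle
    obtain ⟨r, hr, rfl⟩ := Finset.mem_image.mp (Finset.mem_coe.mp hx)
    obtain ⟨s, hs, rfl⟩ := Finset.mem_image.mp (Finset.mem_coe.mp hy)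
    have hrm := Finset.mem_filter.mp hr
    have hsm := Finset.mem_filter.mp hs
    have hlt : r.1 < s.1 := lt_of_le_of_ne hle hxy
    have hh := ht_lt_ht hrm.1 hsm.1 (Or.inl hlt)
    rw [hrm.2, hsm.2] at hh
    omega
  have himg : ∀ (m m' : ℕ) (x : α), x ∈ (L m).image Prod.fst → x ∈ (L m').image Prod.fst →
      m = m' ∨ m = m' + 1 ∨ m' = m + 1 := by
    intro m m' x hx hx'
    obtain ⟨r, hr, hr1⟩ := Finset.mem_image.mp hx
    obtain ⟨s, hs, hs1⟩ := Finset.mem_image.mp hx'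
    have hrm := Finset.mem_filter.mp hr
    have hsm := Finset.mem_filter.mp hs
    by_cases hrs : r = s
    · left; rw [← hrm.2, ← hsm.2, hrs]
    · rcases copy x r s hrm.1 hsm.1 hr1 hs1 hrs with h | h
      · right; right; rw [← hrm.2, ← hsm.2]; exact h
      · right; left; rw [← hrm.2, ← hsm.2]; exact h
  set Codd : Fin (j + 1) → Finset α := fun i => (L (2 * i.1 + 1)).image Prod.fst with hCodd
  set Cev : Fin (j + 1) → Finset α := fun i => (L (2 * i.1 + 2)).image Prod.fst with hCev
  have hACodd : ∀ i, IsAntichain (· ≤ ·) (↑(Codd i) : Set α) := by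
    intro i; rw [hCodd]; exact levAC _
  have hACev : ∀ i, IsAntichain (· ≤ ·) (↑(Cev i) : Set α) := by
    intro i; rw [hCev]; exact levAC _
  have hdisjodd : Pairwise (Function.onFun Disjoint Codd) := by
    intro i i' hii
    show Disjoint (Codd i) (Codd i')
    rw [hCodd, Finset.disjoint_left]
    intro x hx hx'
    have hvne : i.1 ≠ i'.1 := fun h => hii (Fin.ext h)
    rcases himg _ _ x hx hx' with h | h | h <;> omega
  have hdisjev : Pairwise (Function.onFun Disjoint Cev) := by
    intro i i' hii
    show Disjoint (Cev i) (Cev i')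
    rw [hCev, Finset.disjoint_left]
    intro x hx hx'
    have hvne : i.1 ≠ i'.1 := fun h => hii (Fin.ext h)
    rcases himg _ _ x hx hx' with h | h | h <;> omega
  have cardCodd : (Finset.univ.biUnion Codd).card
      = ∑ i ∈ Finset.range (j + 1), (L (2 * i + 1)).card := by
    rw [Finset.card_biUnion (fun x _ y _ h => hdisjodd h)]
    calc ∑ i : Fin (j + 1), (Codd i).card
        = ∑ i : Fin (j + 1), (L (2 * i.1 + 1)).card := by
          refine Finset.sum_congr rfl ?_
          intro i _
          rw [hCodd, Finset.card_image_of_injOn (levinj _)]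
      _ = ∑ i ∈ Finset.range (j + 1), (L (2 * i + 1)).card :=
          Fin.sum_univ_eq_sum_range (fun i => (L (2 * i + 1)).card) (j + 1)
  have cardCev : (Finset.univ.biUnion Cev).card
      = ∑ i ∈ Finset.range (j + 1), (L (2 * i + 2)).card := by
    rw [Finset.card_biUnion (fun x _ y _ h => hdisjev h)]
    calc ∑ i : Fin (j + 1), (Cev i).card
        = ∑ i : Fin (j + 1), (L (2 * i.1 + 2)).card := by
          refine Finset.sum_congr rfl ?_
          intro i _
          rw [hCev, Finset.card_image_of_injOn (levinj _)]
      _ = ∑ i ∈ Finset.range (j + 1), (L (2 * i + 2)).card :=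
          Fin.sum_univ_eq_sum_range (fun i => (L (2 * i + 2)).card) (j + 1)
  have hparts : R = (Finset.range (j + 1)).biUnion (fun i => L (2 * i + 1) ∪ L (2 * i + 2)) := by
    ext r
    simp only [Finset.mem_biUnion, Finset.mem_range, Finset.mem_union, hL, Finset.mem_filter]
    constructor
    · intro hr
      have h1 := ht1 r hr
      have h2 := ht2 r hr
      refine ⟨(ht R r - 1) / 2, by omega, ?_⟩
      have hcase : ht R r = 2 * ((ht R r - 1) / 2) + 1 ∨ ht R r = 2 * ((ht R r - 1) / 2) + 2 := by
        omega
      rcases hcase with h | h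
      · exact Or.inl ⟨hr, h⟩
      · exact Or.inr ⟨hr, h⟩
    · rintro ⟨i, -, h | h⟩ <;> exact h.1
  have cardR : R.card = (∑ i ∈ Finset.range (j + 1), (L (2 * i + 1)).card)
      + ∑ i ∈ Finset.range (j + 1), (L (2 * i + 2)).card := by
    rw [hparts, Finset.card_biUnion, ← Finset.sum_add_distrib]
    · refine Finset.sum_congr rfl ?_
      intro i _
      rw [Finset.card_union_of_disjoint]
      rw [Finset.disjoint_left]
      intro r hr hr'
      simp only [hL, Finset.mem_filter] at hr hr'
      omega
    · intro x _ y _ hxy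
      rw [Function.onFun, Finset.disjoint_left]
      intro r hr hr'
      simp only [Finset.mem_union, hL, Finset.mem_filter] at hr hr'
      rcases hr with h | h <;> rcases hr' with h' | h' <;> omega
  have hdisAB : Disjoint (A.image (fun x => (x, false))) (B.image (fun x => (x, true))) := by
    rw [Finset.disjoint_left]
    intro r hr hr'
    obtain ⟨a, -, rfl⟩ := Finset.mem_image.mp hr
    obtain ⟨b, -, hb⟩ := Finset.mem_image.mp hr'
    simpa using congrArg Prod.snd hb
  have cardR2 : R.card = A.card + B.card := by
    rw [hR, Finset.card_union_of_disjoint hdisAB,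
      Finset.card_image_of_injective _ (fun a b h => by injection h),
      Finset.card_image_of_injective _ (fun a b h => by injection h)]
  have hCle : (Finset.univ.biUnion Codd).card ≤ aMax α (j + 1) :=
    le_aMax α (j + 1) Codd hACodd hdisjodd
  have hDle : (Finset.univ.biUnion Cev).card ≤ aMax α (j + 1) :=
    le_aMax α (j + 1) Cev hACev hdisjev
  rw [hA3, hB3]
  omega

end Key


theorem greene_mu_weakly_decreasing
    (α : Type*) [PartialOrder α] [Fintype α] [DecidableEq α] :
    ∀ k : ℕ, 1 ≤ k → mu α (k + 1) ≤ mu α k := by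
  intro k hk
  obtain ⟨j, rfl⟩ : ∃ j, k = j + 1 := ⟨k - 1, by omega⟩
  have hcon := aMax_concave α j
  have hm1 : aMax α j ≤ aMax α (j + 1) := aMax_le_succ α j
  have hm2 : aMax α (j + 1) ≤ aMax α (j + 2) := aMax_le_succ α (j + 1)
  show aMax α (j + 2) - aMax α (j + 1) ≤ aMax α (j + 1) - aMax α j
  omega
end

section
/- In a finite poset P, a_1 (the maximum size of an antichain) equals the number of nonzero entries λ_k of the sequence λ_k = c_k - c_{k-1}; equivalently, the maximum antichain size equals the minimum number of chains needed to cover P (Dilworth's theorem as a consequence of duality). -/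
open Finset

set_option linter.unusedSectionVars false
set_option linter.unnecessarySimpa false
set_option maxHeartbeats 1000000

section DilworthHelpers

variable {α : Type*} [PartialOrder α] [Fintype α] [DecidableEq α]

noncomputable def mac (s : Finset α) : ℕ :=
  sSup {n | ∃ t : Finset α, t ⊆ s ∧ IsAntichain (· ≤ ·) (t : Set α) ∧ t.card = n}

lemma mac_set_nonempty (s : Finset α) :
    {n | ∃ t : Finset α, t ⊆ s ∧ IsAntichain (· ≤ ·) (t : Set α) ∧ t.card = n}.Nonempty :=
  ⟨0, ∅, by simp [IsAntichain]⟩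

lemma mac_set_bdd (s : Finset α) :
    BddAbove {n | ∃ t : Finset α, t ⊆ s ∧ IsAntichain (· ≤ ·) (t : Set α) ∧ t.card = n} := by
  refine ⟨s.card, fun n hn => ?_⟩
  obtain ⟨t, hts, -, rfl⟩ := hn
  exact Finset.card_le_card hts

lemma exists_mac (s : Finset α) :
    ∃ t : Finset α, t ⊆ s ∧ IsAntichain (· ≤ ·) (t : Set α) ∧ t.card = mac s :=
  Nat.sSup_mem (mac_set_nonempty s) (mac_set_bdd s)

lemma le_mac {t s : Finset α} (h : t ⊆ s) (ha : IsAntichain (· ≤ ·) (t : Set α)) :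
    t.card ≤ mac s :=
  le_csSup (mac_set_bdd s) ⟨t, h, ha, rfl⟩

lemma mac_mono {s s' : Finset α} (h : s ⊆ s') : mac s ≤ mac s' := by
  obtain ⟨t, hts, hta, htc⟩ := exists_mac s
  rw [← htc]
  exact le_mac (hts.trans h) hta

lemma antichain_card_le {t : Finset α} (ht : IsAntichain (· ≤ ·) (t : Set α)) {k : ℕ}
    (f : Fin k → Finset α) (hc : ∀ i, IsChain (· ≤ ·) ((f i : Set α)))
    (hcov : ∀ x ∈ t, ∃ i, x ∈ f i) : t.card ≤ k := by
  have hsub : t ⊆ Finset.univ.biUnion (fun i => f i ∩ t) := by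
    intro x hx
    obtain ⟨i, hi⟩ := hcov x hx
    exact Finset.mem_biUnion.2 ⟨i, Finset.mem_univ _, Finset.mem_inter.2 ⟨hi, hx⟩⟩
  have h1 : ∀ i : Fin k, (f i ∩ t).card ≤ 1 := by
    intro i
    refine Finset.card_le_one.2 fun a ha b hb => ?_
    simp only [Finset.mem_inter] at ha hb
    by_contra hab
    rcases hc i ha.1 hb.1 hab with h | h
    · exact ht ha.2 hb.2 hab h
    · exact ht hb.2 ha.2 (Ne.symm hab) h
  calc t.card ≤ (Finset.univ.biUnion (fun i => f i ∩ t)).card := Finset.card_le_card hsub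
    _ ≤ ∑ i : Fin k, (f i ∩ t).card := Finset.card_biUnion_le
    _ ≤ ∑ _i : Fin k, 1 := Finset.sum_le_sum fun i _ => h1 i
    _ = k := by simp

lemma chain_meets_antichain {t : Finset α} (ht : IsAntichain (· ≤ ·) (t : Set α)) {k : ℕ}
    (f : Fin k → Finset α) (hc : ∀ i, IsChain (· ≤ ·) ((f i : Set α)))
    (hcov : ∀ x ∈ t, ∃ i, x ∈ f i) (hcard : t.card = k) (j : Fin k) :
    ∃ x ∈ t, x ∈ f j := by
  by_contra hno
  push_neg at hno
  have hsub : t ⊆ Finset.univ.biUnion (fun i => f i ∩ t) := by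
    intro x hx
    obtain ⟨i, hi⟩ := hcov x hx
    exact Finset.mem_biUnion.2 ⟨i, Finset.mem_univ _, Finset.mem_inter.2 ⟨hi, hx⟩⟩
  have h1 : ∀ i : Fin k, (f i ∩ t).card ≤ 1 := by
    intro i
    refine Finset.card_le_one.2 fun a ha b hb => ?_
    simp only [Finset.mem_inter] at ha hb
    by_contra hab
    rcases hc i ha.1 hb.1 hab with h | h
    · exact ht ha.2 hb.2 hab h
    · exact ht hb.2 ha.2 (Ne.symm hab) h
  have hj0 : (f j ∩ t).card = 0 := by
    rw [Finset.card_eq_zero]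
    ext x
    simp only [Finset.mem_inter, Finset.notMem_empty, iff_false]
    rintro ⟨hxf, hxt⟩
    exact hno x hxt hxf
  have hlt : ∑ i : Fin k, (f i ∩ t).card < ∑ _i : Fin k, 1 := by
    refine Finset.sum_lt_sum (fun i _ => h1 i) ⟨j, Finset.mem_univ _, ?_⟩
    rw [hj0]; exact Nat.zero_lt_one
  have : t.card ≤ ∑ i : Fin k, (f i ∩ t).card :=
    le_trans (Finset.card_le_card hsub) Finset.card_biUnion_le
  simp only [Finset.sum_const, smul_eq_mul, mul_one, Finset.card_univ, Fintype.card_fin] at hlt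
  omega

lemma chain_exists_max {t : Finset α} (ht : IsChain (· ≤ ·) (t : Set α)) (hne : t.Nonempty) :
    ∃ m ∈ t, ∀ x ∈ t, x ≤ m := by
  obtain ⟨m, hm, hmax⟩ := t.exists_maximal hne
  refine ⟨m, hm, fun x hx => ?_⟩
  by_cases hxm : x = m
  · exact hxm.le
  · rcases ht hx hm hxm with h | h
    · exact h
    · exact absurd (lt_of_le_of_ne h (Ne.symm hxm)) (fun hlt => lt_irrefl _ (lt_of_lt_of_le hlt (hmax hx hlt.le)))


lemma singleton_isAntichain (x : α) : IsAntichain (· ≤ ·) ((({x} : Finset α) : Set α)) := by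
  intro p hp q hq hpq
  exfalso
  simp only [Finset.coe_singleton, Set.mem_singleton_iff] at hp hq
  exact hpq (hp.trans hq.symm)

lemma singleton_isChain (x : α) : IsChain (· ≤ ·) ((({x} : Finset α) : Set α)) := by
  intro p hp q hq hpq
  exfalso
  simp only [Finset.coe_singleton, Set.mem_singleton_iff] at hp hq
  exact hpq (hp.trans hq.symm)

lemma pairwise_disjoint_cons {n : ℕ} {K : Finset α} {f : Fin n → Finset α}
    (h1 : ∀ j, Disjoint K (f j)) (h2 : Pairwise (Function.onFun Disjoint f)) :
    Pairwise (Function.onFun Disjoint (Fin.cons K f : Fin (n+1) → Finset α)) := by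
  intro p q hpq
  rcases Fin.eq_zero_or_eq_succ p with rfl | ⟨p', rfl⟩ <;>
    rcases Fin.eq_zero_or_eq_succ q with rfl | ⟨q', rfl⟩
  · exact absurd rfl hpq
  · simpa [Function.onFun] using h1 q'
  · simpa [Function.onFun] using (h1 p').symm
  · simpa [Function.onFun] using h2 (fun h => hpq (congrArg Fin.succ h))

/-- Dilworth's theorem, finset version, with disjoint chains -/
lemma dilworth_finset (s : Finset α) :
    ∃ (k : ℕ) (f : Fin k → Finset α), k ≤ mac s ∧
      (∀ i, IsChain (· ≤ ·) ((f i : Set α))) ∧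
      Pairwise (Function.onFun Disjoint f) ∧
      (∀ i, f i ⊆ s) ∧ (∀ x ∈ s, ∃ i, x ∈ f i) := by
  classical
  induction s using Finset.strongInduction with
  | _ s ih =>
  rcases s.eq_empty_or_nonempty with rfl | hne
  · exact ⟨0, Fin.elim0, Nat.zero_le _, fun i => i.elim0, fun i => i.elim0,
      fun i => i.elim0, fun x hx => absurd hx (Finset.notMem_empty x)⟩
  obtain ⟨a, ha, hamax⟩ := s.exists_maximal hne
  set s' := s.erase a with hs'def
  have hss' : s' ⊂ s := Finset.erase_ssubset ha
  obtain ⟨k, f, hk, hch, hdisj, hsub, hcov⟩ := ih s' hss'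
  have hlow : mac s' ≤ k := by
    obtain ⟨t, hts, hta, htc⟩ := exists_mac s'
    rw [← htc]
    exact antichain_card_le hta f hch (fun x hx => hcov x (hts hx))
  have hkk : k = mac s' := le_antisymm hk hlow
  by_cases hk0 : k = 0
  · -- s' is empty, s = {a}
    subst hk0
    have hs'e : s' = ∅ := by
      by_contra hne'
      obtain ⟨x, hx⟩ := Finset.nonempty_of_ne_empty hne'
      have : ({x} : Finset α).card ≤ mac s' :=
        le_mac (Finset.singleton_subset_iff.2 hx) (singleton_isAntichain _)
      simp [← hkk] at this
    refine ⟨1, fun _ => {a}, ?_, ?_, ?_, ?_, ?_⟩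
    · have : ({a} : Finset α).card ≤ mac s :=
        le_mac (Finset.singleton_subset_iff.2 ha) (singleton_isAntichain _)
      simpa using this
    · intro i; exact singleton_isChain _
    · intro i j hij; exact absurd (Subsingleton.elim i j) hij
    · intro i; exact Finset.singleton_subset_iff.2 ha
    · intro x hx
      refine ⟨0, ?_⟩
      by_cases hxa : x = a
      · simp [hxa]
      · exfalso
        have : x ∈ s' := Finset.mem_erase.2 ⟨hxa, hx⟩
        rw [hs'e] at this; exact absurd this (Finset.notMem_empty x)
  · -- k > 0
    have hkpos : 0 < k := Nat.pos_of_ne_zero hk0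
    -- T i : elements of f i belonging to some k-antichain of s'
    set T : Fin k → Finset α := fun i => (f i).filter
      (fun x => ∃ t : Finset α, t ⊆ s' ∧ IsAntichain (· ≤ ·) (t : Set α) ∧ t.card = k ∧ x ∈ t)
      with hTdef
    have hTne : ∀ i, (T i).Nonempty := by
      intro i
      obtain ⟨t, hts, hta, htc⟩ := exists_mac s'
      rw [← hkk] at htc
      obtain ⟨x, hxt, hxf⟩ := chain_meets_antichain hta f hch
        (fun x hx => hcov x (hts hx)) htc i
      exact ⟨x, Finset.mem_filter.2 ⟨hxf, t, hts, hta, htc, hxt⟩⟩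
    have hTchain : ∀ i, IsChain (· ≤ ·) ((T i : Set α)) :=
      fun i => (hch i).mono (by rw [hTdef]; exact_mod_cast Finset.filter_subset _ _)
    choose g hg1 hg2 using fun i => chain_exists_max (hTchain i) (hTne i)
    have hgf : ∀ i, g i ∈ f i := fun i => (Finset.mem_filter.1 (hg1 i)).1
    have hgs' : ∀ i, g i ∈ s' := fun i => hsub i (hgf i)
    have hgne : ∀ i, g i ≠ a := fun i => (Finset.mem_erase.1 (hgs' i)).1
    -- key: g i's are pairwise non-comparable
    have hkey : ∀ i j, i ≠ j → ¬ g i ≤ g j := by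
      intro i j hij hle
      obtain ⟨t, hts, hta, htc, hgjt⟩ := (Finset.mem_filter.1 (hg1 j)).2
      obtain ⟨x, hxt, hxf⟩ := chain_meets_antichain hta f hch
        (fun y hy => hcov y (hts hy)) htc i
      have hxT : x ∈ T i := Finset.mem_filter.2 ⟨hxf, t, hts, hta, htc, hxt⟩
      have hxgj : x ≤ g j := le_trans (hg2 i x hxT) hle
      have hxne : x ≠ g j := by
        intro h
        have : x ∈ f j := h ▸ (hgf j)
        exact (Finset.disjoint_left.1 (hdisj hij)) hxf this
      exact hta hxt hgjt hxne hxgj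
    by_cases hB : ∀ i, ¬ g i ≤ a
    · -- A := {a} ∪ {g i} is an antichain of size k+1; cover with f plus {a}
      have hginj : Function.Injective g := by
        intro i j hgij
        by_contra hij
        exact hkey i j hij hgij.le
      set A : Finset α := insert a (Finset.image g Finset.univ) with hAdef
      have hAcard : A.card = k + 1 := by
        rw [hAdef, Finset.card_insert_of_notMem, Finset.card_image_of_injective _ hginj]
        · simp
        · simp only [Finset.mem_image]
          rintro ⟨i, -, h⟩
          exact hgne i h
      have hAanti : IsAntichain (· ≤ ·) (A : Set α) := by
        intro p hp q hq hpq hle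
        simp only [hAdef, Finset.coe_insert, Set.mem_insert_iff, Finset.coe_image,
          Set.mem_image, Finset.mem_coe, Finset.mem_univ, true_and] at hp hq
        rcases hp with hpa | ⟨i, -, rfl⟩ <;> rcases hq with hqa | ⟨j, -, rfl⟩
        · exact hpq (hpa.trans hqa.symm)
        · -- a ≤ g j
          rw [hpa] at hle
          have : g j ∈ s := (Finset.erase_subset a s) (hgs' j)
          rcases lt_or_eq_of_le hle with h | h
          · exact lt_irrefl _ (lt_of_lt_of_le h (hamax this h.le))
          · exact hgne j h.symm
        · rw [hqa] at hle
          exact hB i hle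
        · exact hkey i j (fun h => hpq (congrArg g h)) hle
      have hAs : A ⊆ s := by
        intro x hx
        rw [hAdef, Finset.mem_insert] at hx
        rcases hx with rfl | hx
        · exact ha
        · obtain ⟨i, -, rfl⟩ := Finset.mem_image.1 hx
          exact (Finset.erase_subset a s) (hgs' i)
      have hmacs : k + 1 ≤ mac s := hAcard ▸ le_mac hAs hAanti
      refine ⟨k + 1, Fin.cons {a} f, hmacs, ?_, ?_, ?_, ?_⟩
      · intro j
        rcases Fin.eq_zero_or_eq_succ j with rfl | ⟨j', rfl⟩
        · simpa using singleton_isChain a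
        · simpa using hch j'
      · refine pairwise_disjoint_cons ?_ hdisj
        intro j
        rw [Finset.disjoint_left]
        intro x hx hxf
        rw [Finset.mem_singleton] at hx
        subst hx
        exact (Finset.mem_erase.1 (hsub j hxf)).1 rfl
      · intro j
        rcases Fin.eq_zero_or_eq_succ j with rfl | ⟨j', rfl⟩
        · simpa using ha
        · simpa using (hsub j').trans (Finset.erase_subset a s)
      · intro x hx
        by_cases hxa : x = a
        · exact ⟨0, by simp [hxa]⟩
        · obtain ⟨i, hi⟩ := hcov x (Finset.mem_erase.2 ⟨hxa, hx⟩)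
          exact ⟨i.succ, by simpa using hi⟩
    · -- some g i ≤ a: remove chain K = {a} ∪ (f i below g i), recurse
      push_neg at hB
      obtain ⟨i, hia⟩ := hB
      set K : Finset α := insert a ((f i).filter (· ≤ g i)) with hKdef
      have hKs : K ⊆ s := by
        intro x hx
        rw [hKdef, Finset.mem_insert] at hx
        rcases hx with rfl | hx
        · exact ha
        · exact (Finset.erase_subset a s) (hsub i (Finset.mem_filter.1 hx).1)
      have hKchain : IsChain (· ≤ ·) (K : Set α) := by
        intro p hp q hq hpq
        simp only [hKdef, Finset.coe_insert, Set.mem_insert_iff, Finset.mem_coe,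
          Finset.mem_filter] at hp hq
        rcases hp with rfl | ⟨hpf, hpg⟩ <;> rcases hq with rfl | ⟨hqf, hqg⟩
        · exact absurd rfl hpq
        · exact Or.inr (le_trans hqg hia)
        · exact Or.inl (le_trans hpg hia)
        · exact hch i hpf hqf hpq
      have haK : a ∈ K := by rw [hKdef]; exact Finset.mem_insert_self a _
      set s'' : Finset α := s \ K with hs''def
      have hss'' : s'' ⊂ s := by
        refine Finset.ssubset_iff_of_subset (Finset.sdiff_subset) |>.2 ⟨a, ha, ?_⟩
        simp [hs''def, haK]
      obtain ⟨m, f', hm, hch', hdisj', hsub', hcov'⟩ := ih s'' hss''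
      have hs''s' : s'' ⊆ s' := by
        intro x hx
        rw [hs''def, Finset.mem_sdiff] at hx
        refine Finset.mem_erase.2 ⟨?_, hx.1⟩
        rintro rfl
        exact hx.2 haK
      -- mac s'' < k
      have hmacs'' : mac s'' < k := by
        rcases lt_or_ge (mac s'') k with h | h
        · exact h
        exfalso
        obtain ⟨t, hts, hta, htc⟩ := exists_mac s''
        have hmacle : mac s'' ≤ k := hkk ▸ mac_mono hs''s'
        have htk : t.card = k := by omega
        obtain ⟨x, hxt, hxf⟩ := chain_meets_antichain hta f hch
          (fun y hy => hcov y (hs''s' (hts hy))) htk i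
        have hxT : x ∈ T i := Finset.mem_filter.2
          ⟨hxf, t, hts.trans hs''s', hta, htk, hxt⟩
        have hxK : x ∈ K := by
          rw [hKdef, Finset.mem_insert]
          exact Or.inr (Finset.mem_filter.2 ⟨hxf, hg2 i x hxT⟩)
        have := hts hxt
        rw [hs''def, Finset.mem_sdiff] at this
        exact this.2 hxK
      have hmk : m + 1 ≤ k := by omega
      refine ⟨m + 1, Fin.cons K f', ?_, ?_, ?_, ?_, ?_⟩
      · calc m + 1 ≤ k := hmk
          _ = mac s' := hkk
          _ ≤ mac s := mac_mono (Finset.erase_subset a s)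
      · intro j
        rcases Fin.eq_zero_or_eq_succ j with rfl | ⟨j', rfl⟩
        · simpa using hKchain
        · simpa using hch' j'
      · refine pairwise_disjoint_cons ?_ hdisj'
        intro j
        rw [Finset.disjoint_left]
        intro x hx hxf
        have := hsub' j hxf
        rw [hs''def, Finset.mem_sdiff] at this
        exact this.2 hx
      · intro j
        rcases Fin.eq_zero_or_eq_succ j with rfl | ⟨j', rfl⟩
        · simpa using hKs
        · simpa using (hsub' j').trans (Finset.sdiff_subset)
      · intro x hx
        by_cases hxK : x ∈ K
        · exact ⟨0, by simpa using hxK⟩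
        · obtain ⟨j, hj⟩ := hcov' x (by rw [hs''def, Finset.mem_sdiff]; exact ⟨hx, hxK⟩)
          exact ⟨j.succ, by simpa using hj⟩

lemma aMax_one_eq_mac : aMax α 1 = mac (Finset.univ : Finset α) := by
  unfold aMax mac
  congr 1
  ext n
  constructor
  · rintro ⟨f, hf, -, rfl⟩
    refine ⟨Finset.univ.biUnion f, Finset.subset_univ _, ?_, rfl⟩
    have : Finset.univ.biUnion f = f 0 := by
      ext x
      simp only [Finset.mem_biUnion, Finset.mem_univ, true_and]
      exact ⟨fun ⟨i, h⟩ => by rwa [Subsingleton.elim i 0] at h, fun h => ⟨0, h⟩⟩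
    rw [this]
    exact hf 0
  · rintro ⟨t, -, hta, rfl⟩
    refine ⟨fun _ => t, fun _ => hta,
      fun i j hij => absurd (Subsingleton.elim i j) hij, ?_⟩
    congr 1
    ext x
    simp only [Finset.mem_biUnion, Finset.mem_univ, true_and]
    exact ⟨fun h => ⟨0, h⟩, fun ⟨i, h⟩ => h⟩

lemma cMax_set_nonempty (k : ℕ) :
    {n : ℕ | ∃ f : Fin k → Finset α,
      (∀ i, IsChain (· ≤ ·) (↑(f i) : Set α)) ∧
      Pairwise (Function.onFun Disjoint f) ∧
      n = (Finset.univ.biUnion f).card}.Nonempty := by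
  refine ⟨(Finset.univ.biUnion (fun _ : Fin k => (∅ : Finset α))).card,
    fun _ => ∅, fun i => ?_, fun i j hij => ?_, rfl⟩
  · intro p hp; exact absurd hp (by simp)
  · exact Finset.disjoint_empty_left _

lemma cMax_set_bdd (k : ℕ) :
    BddAbove {n : ℕ | ∃ f : Fin k → Finset α,
      (∀ i, IsChain (· ≤ ·) (↑(f i) : Set α)) ∧
      Pairwise (Function.onFun Disjoint f) ∧
      n = (Finset.univ.biUnion f).card} := by
  refine ⟨Fintype.card α, fun n hn => ?_⟩
  obtain ⟨f, -, -, rfl⟩ := hn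
  exact Finset.card_le_card (Finset.subset_univ _)

lemma cMax_mem (k : ℕ) : ∃ f : Fin k → Finset α,
    (∀ i, IsChain (· ≤ ·) (↑(f i) : Set α)) ∧
    Pairwise (Function.onFun Disjoint f) ∧
    cMax α k = (Finset.univ.biUnion f).card :=
  Nat.sSup_mem (cMax_set_nonempty k) (cMax_set_bdd k)

lemma le_cMax {k : ℕ} (f : Fin k → Finset α)
    (hc : ∀ i, IsChain (· ≤ ·) (↑(f i) : Set α))
    (hd : Pairwise (Function.onFun Disjoint f)) :
    (Finset.univ.biUnion f).card ≤ cMax α k :=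
  le_csSup (cMax_set_bdd k) ⟨f, hc, hd, rfl⟩

lemma cMax_le_card (k : ℕ) : cMax α k ≤ Fintype.card α := by
  obtain ⟨f, -, -, h⟩ := cMax_mem (α := α) k
  rw [h]
  exact Finset.card_le_card (Finset.subset_univ _)

lemma cMax_mono {k l : ℕ} (hkl : k ≤ l) : cMax α k ≤ cMax α l := by
  classical
  obtain ⟨f, hch, hd, hc⟩ := cMax_mem (α := α) k
  set f' : Fin l → Finset α := fun j => if h : (j : ℕ) < k then f ⟨j, h⟩ else ∅ with hf'def
  have hbi : Finset.univ.biUnion f' = Finset.univ.biUnion f := by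
    ext x
    simp only [Finset.mem_biUnion, Finset.mem_univ, true_and]
    constructor
    · rintro ⟨j, hj⟩
      have hj' : x ∈ (if h : (j : ℕ) < k then f ⟨j, h⟩ else ∅) := hj
      by_cases h : (j : ℕ) < k
      · rw [dif_pos h] at hj'; exact ⟨⟨j, h⟩, hj'⟩
      · rw [dif_neg h] at hj'; exact absurd hj' (by simp)
    · rintro ⟨i, hi⟩
      refine ⟨⟨(i : ℕ), lt_of_lt_of_le i.isLt hkl⟩, ?_⟩
      show x ∈ (if h : ((⟨(i : ℕ), lt_of_lt_of_le i.isLt hkl⟩ : Fin l) : ℕ) < k then f ⟨_, h⟩ else ∅)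
      rw [dif_pos i.isLt]
      simpa using hi
  have hch' : ∀ j, IsChain (· ≤ ·) (↑(f' j) : Set α) := by
    intro j
    rw [hf'def]
    by_cases h : (j : ℕ) < k
    · simp only [dif_pos h]; exact hch _
    · simp only [dif_neg h]
      intro p hp; exact absurd hp (by simp)
  have hd' : Pairwise (Function.onFun Disjoint f') := by
    intro i j hij
    unfold Function.onFun
    rw [hf'def]
    simp only
    by_cases hi : (i : ℕ) < k <;> by_cases hj : (j : ℕ) < k
    · rw [dif_pos hi, dif_pos hj]
      refine hd ?_
      simp only [ne_eq, Fin.mk.injEq]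
      intro h
      exact hij (Fin.ext h)
    · rw [dif_pos hi, dif_neg hj]; exact Finset.disjoint_empty_right _
    · rw [dif_neg hi]; exact Finset.disjoint_empty_left _
    · rw [dif_neg hi]; exact Finset.disjoint_empty_left _
  calc cMax α k = (Finset.univ.biUnion f).card := hc
    _ = (Finset.univ.biUnion f').card := by rw [hbi]
    _ ≤ cMax α l := le_cMax f' hch' hd'

lemma cMax_step (k : ℕ) (h : cMax α k < Fintype.card α) :
    cMax α k + 1 ≤ cMax α (k + 1) := by
  classical
  obtain ⟨f, hch, hd, hc⟩ := cMax_mem (α := α) k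
  set U := Finset.univ.biUnion f with hUdef
  have hUne : U ≠ Finset.univ := by
    intro hU
    rw [hc, hU, Finset.card_univ] at h
    exact lt_irrefl _ h
  have : ∃ x : α, x ∉ U := by
    by_contra hx
    push_neg at hx
    exact hUne (Finset.eq_univ_iff_forall.2 hx)
  obtain ⟨x, hx⟩ := this
  set f' : Fin (k + 1) → Finset α := Fin.cons {x} f with hf'def
  have hch' : ∀ j, IsChain (· ≤ ·) (↑(f' j) : Set α) := by
    intro j
    rcases Fin.eq_zero_or_eq_succ j with rfl | ⟨j', rfl⟩
    · simpa [hf'def] using singleton_isChain x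
    · simpa [hf'def] using hch j'
  have hd' : Pairwise (Function.onFun Disjoint f') := by
    refine pairwise_disjoint_cons ?_ hd
    intro j
    rw [Finset.disjoint_left]
    intro y hy hyf
    rw [Finset.mem_singleton] at hy
    subst hy
    exact hx (Finset.mem_biUnion.2 ⟨j, Finset.mem_univ _, hyf⟩)
  have hbi : Finset.univ.biUnion f' = insert x U := by
    ext y
    simp only [Finset.mem_biUnion, Finset.mem_univ, true_and, Finset.mem_insert]
    constructor
    · rintro ⟨j, hj⟩
      rcases Fin.eq_zero_or_eq_succ j with rfl | ⟨j', rfl⟩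
      · left; simpa [hf'def] using hj
      · right
        rw [hUdef]
        refine Finset.mem_biUnion.2 ⟨j', Finset.mem_univ _, ?_⟩
        simpa [hf'def] using hj
    · rintro (rfl | hy)
      · exact ⟨0, by simp [hf'def]⟩
      · rw [hUdef] at hy
        obtain ⟨i, -, hi⟩ := Finset.mem_biUnion.1 hy
        exact ⟨i.succ, by simpa [hf'def] using hi⟩
  have : (Finset.univ.biUnion f').card = cMax α k + 1 := by
    rw [hbi, Finset.card_insert_of_notMem hx, hc]
  calc cMax α k + 1 = (Finset.univ.biUnion f').card := this.symm
    _ ≤ cMax α (k + 1) := le_cMax f' hch' hd'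

lemma mac_le_of_cMax_eq {j : ℕ} (h : cMax α j = Fintype.card α) :
    mac (Finset.univ : Finset α) ≤ j := by
  obtain ⟨f, hch, -, hc⟩ := cMax_mem (α := α) j
  have hU : Finset.univ.biUnion f = Finset.univ := by
    apply Finset.eq_univ_of_card
    rw [← hc, h]
  obtain ⟨t, -, hta, htc⟩ := exists_mac (Finset.univ : Finset α)
  rw [← htc]
  refine antichain_card_le hta f hch ?_
  intro x hx
  have : x ∈ Finset.univ.biUnion f := by rw [hU]; exact Finset.mem_univ x
  obtain ⟨i, -, hi⟩ := Finset.mem_biUnion.1 this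
  exact ⟨i, hi⟩


end DilworthHelpers

theorem dilworth_from_duality
    (α : Type*) [PartialOrder α] [Fintype α] [DecidableEq α] :
    aMax α 1 = ((Finset.Icc 1 (Fintype.card α)).filter (fun i => lam α i ≠ 0)).card ∧
    aMax α 1 = sInf {l : ℕ | ∃ f : Fin l → Finset α,
      (∀ i, IsChain (· ≤ ·) (↑(f i) : Set α)) ∧ ∀ x : α, ∃ i, x ∈ f i} := by
  classical
  set N := Fintype.card α with hNdef
  set aa := mac (Finset.univ : Finset α) with haadef
  have haMax : aMax α 1 = aa := aMax_one_eq_mac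
  -- from Dilworth: a disjoint chain cover of size m ≤ aa
  obtain ⟨m, f, hm, hch, hd, hsub, hcov⟩ := dilworth_finset (Finset.univ : Finset α)
  have hcovall : ∀ x : α, ∃ i, x ∈ f i := fun x => hcov x (Finset.mem_univ x)
  have hbiU : Finset.univ.biUnion f = Finset.univ := by
    apply Finset.eq_univ_iff_forall.2
    intro x
    obtain ⟨i, hi⟩ := hcovall x
    exact Finset.mem_biUnion.2 ⟨i, Finset.mem_univ _, hi⟩
  have hcm : cMax α m = N := by
    refine le_antisymm (cMax_le_card m) ?_
    have := le_cMax f hch hd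
    rw [hbiU, Finset.card_univ] at this
    exact this
  have ham : aa ≤ m := mac_le_of_cMax_eq hcm
  have hmaa : m = aa := le_antisymm hm ham
  have haaN : aa ≤ N := by
    obtain ⟨t, -, -, htc⟩ := exists_mac (Finset.univ : Finset α)
    rw [haadef, hNdef, ← htc, ← Finset.card_univ]
    exact Finset.card_le_card (Finset.subset_univ _)
  -- cMax at aa is N, below aa it's < N
  have hcaa : ∀ j, aa ≤ j → cMax α j = N := by
    intro j hj
    refine le_antisymm (cMax_le_card j) ?_
    calc N = cMax α m := hcm.symm
      _ ≤ cMax α j := cMax_mono (by omega)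
  have hclt : ∀ j, j < aa → cMax α j < N := by
    intro j hj
    rcases lt_or_ge (cMax α j) N with h | h
    · exact h
    have : cMax α j = N := le_antisymm (cMax_le_card j) h
    have := mac_le_of_cMax_eq this
    omega
  constructor
  · -- part 1
    rw [haMax]
    have hfilter : (Finset.Icc 1 N).filter (fun i => lam α i ≠ 0) = Finset.Icc 1 aa := by
      ext i
      simp only [Finset.mem_filter, Finset.mem_Icc]
      constructor
      · rintro ⟨⟨h1, h2⟩, hlam⟩
        refine ⟨h1, ?_⟩
        by_contra hia
        push_neg at hia
        have e1 : cMax α i = N := hcaa i (by omega)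
        have e2 : cMax α (i - 1) = N := hcaa (i - 1) (by omega)
        apply hlam
        unfold lam
        rw [e1, e2]
        omega
      · rintro ⟨h1, h2⟩
        refine ⟨⟨h1, by omega⟩, ?_⟩
        have hlt : cMax α (i - 1) < N := hclt (i - 1) (by omega)
        have hstep : cMax α (i - 1) + 1 ≤ cMax α (i - 1 + 1) := cMax_step (i - 1) hlt
        have : i - 1 + 1 = i := by omega
        rw [this] at hstep
        unfold lam
        omega
    rw [hfilter, Nat.card_Icc]
    omega
  · -- part 2
    rw [haMax]
    have hmem : m ∈ {l : ℕ | ∃ f : Fin l → Finset α,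
        (∀ i, IsChain (· ≤ ·) (↑(f i) : Set α)) ∧ ∀ x : α, ∃ i, x ∈ f i} :=
      ⟨f, hch, hcovall⟩
    refine le_antisymm ?_ ?_
    · refine le_csInf ⟨m, hmem⟩ ?_
      rintro l ⟨g, hgch, hgcov⟩
      obtain ⟨t, -, hta, htc⟩ := exists_mac (Finset.univ : Finset α)
      rw [haadef, ← htc]
      exact antichain_card_le hta g hgch (fun x _ => hgcov x)
    · calc sInf _ ≤ m := Nat.sInf_le hmem
        _ = aa := hmaa
end

section
/- Let p be a minimal element of a finite poset P, and suppose that for some fixed k, every maximal antichain k-family of P covers p. Then for every k' ≥ k, every maximal antichain k'-family of P covers p. -/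
open Finset

/-!
Induction on `k'`. Suppose a maximal `(k+1)`-family `F` misses `p` and let `G` be a maximal
`k`-family, which covers `p`. Weight each element by the number of the sets `⋃ F`, `⋃ G` containing
it; a chain meets each antichain at most once, so every chain has weight at most `2k+1`. Placing
each `x` on the levels `h x - m x + 1, …, h x` below its weighted height `h x` makes every level an
antichain, and the `k+1` odd and `k` even levels form a `(k+1)`-family and a `k`-family of total
size `|⋃ F| + |⋃ G| = a_{k+1} + a_k`; hence both are maximal, and the even one covers `p`. But `p`
is minimal of weight `1`, so it lies only on level `1`.
-/

section WeightedHeight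

variable {α : Type*} [PartialOrder α] [Fintype α] (m : α → ℕ)

open Classical in
noncomputable def chainsBelow (x : α) : Finset (Finset α) :=
  univ.powerset.filter fun s => IsChain (· ≤ ·) (s : Set α) ∧ ∀ y ∈ s, y ≤ x

noncomputable def weightedHeight (x : α) : ℕ :=
  (chainsBelow x).sup fun s => ∑ y ∈ s, m y

lemma mem_chainsBelow {x : α} {s : Finset α} :
    s ∈ chainsBelow x ↔ IsChain (· ≤ ·) (s : Set α) ∧ ∀ y ∈ s, y ≤ x := by
  simp [chainsBelow]

lemma sum_le_weightedHeight {x : α} {s : Finset α} (hs : IsChain (· ≤ ·) (s : Set α))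
    (hsx : ∀ y ∈ s, y ≤ x) : ∑ y ∈ s, m y ≤ weightedHeight m x :=
  le_sup (f := fun s => ∑ y ∈ s, m y) (mem_chainsBelow.2 ⟨hs, hsx⟩)

lemma exists_sum_eq_weightedHeight (x : α) :
    ∃ s : Finset α, IsChain (· ≤ ·) (s : Set α) ∧ (∀ y ∈ s, y ≤ x) ∧
      ∑ y ∈ s, m y = weightedHeight m x := by
  obtain ⟨s, hs, hsum⟩ := exists_mem_eq_sup (chainsBelow x)
    ⟨∅, mem_chainsBelow.2 ⟨by simp, by simp⟩⟩ fun s => ∑ y ∈ s, m y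
  exact ⟨s, (mem_chainsBelow.1 hs).1, (mem_chainsBelow.1 hs).2, hsum.symm⟩

lemma le_weightedHeight (x : α) : m x ≤ weightedHeight m x := by
  simpa using sum_le_weightedHeight m (s := {x}) (by simp) (by simp)

lemma weightedHeight_add_le_of_lt {x y : α} (hyx : y < x) :
    weightedHeight m y + m x ≤ weightedHeight m x := by
  classical
  obtain ⟨s, hs, hsy, hsum⟩ := exists_sum_eq_weightedHeight m y
  have hxs : x ∉ s := fun hx => (hsy x hx).not_gt hyx
  have hchain : IsChain (· ≤ ·) (insert x s : Set α) :=
    hs.insert fun z hz _ => .inr ((hsy z hz).trans hyx.le)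
  calc weightedHeight m y + m x = ∑ z ∈ insert x s, m z := by
        rw [sum_insert hxs, hsum, add_comm]
    _ ≤ weightedHeight m x := sum_le_weightedHeight m (by simpa using hchain) fun z hz => by
        rcases mem_insert.1 hz with rfl | hz
        exacts [le_rfl, (hsy z hz).trans hyx.le]

lemma weightedHeight_eq_of_isMin {p : α} (hp : IsMin p) : weightedHeight m p = m p := by
  refine (le_weightedHeight m p).antisymm' ?_
  obtain ⟨s, -, hsp, hsum⟩ := exists_sum_eq_weightedHeight m p
  have hs : s ⊆ {p} := fun y hy => mem_singleton.2 ((hsp y hy).antisymm (hp (hsp y hy)))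
  simpa [← hsum] using sum_le_sum_of_subset hs

lemma weightedHeight_le {N : ℕ}
    (hN : ∀ s : Finset α, IsChain (· ≤ ·) (s : Set α) → ∑ y ∈ s, m y ≤ N) (x : α) :
    weightedHeight m x ≤ N := by
  obtain ⟨s, hs, -, hsum⟩ := exists_sum_eq_weightedHeight m x
  exact hsum ▸ hN s hs

end WeightedHeight

section Layers

variable {α : Type*} [PartialOrder α] [Fintype α] (m : α → ℕ)

/-- Each `x` occupies the `m x` consecutive levels `weightedHeight m x - m x + 1, …,
weightedHeight m x`; `layer m s` collects the elements occupying level `s`. -/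
noncomputable def layer (s : ℕ) : Finset α :=
  univ.filter fun x => s ≤ weightedHeight m x ∧ weightedHeight m x < s + m x

lemma isAntichain_layer (s : ℕ) : IsAntichain (· ≤ ·) (layer m s : Set α) := by
  intro x hx y hy hne hxy
  simp only [layer, coe_filter, mem_univ, true_and, Set.mem_ofPred_eq] at hx hy
  have := weightedHeight_add_le_of_lt m (lt_of_le_of_ne hxy hne)
  omega

lemma disjoint_layer {d s t : ℕ} (hm : ∀ x, m x ≤ d) (hst : s + d ≤ t) :
    Disjoint (layer m s) (layer m t) := by
  refine disjoint_left.2 fun x hs ht => ?_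
  simp only [layer, mem_filter, mem_univ, true_and] at hs ht
  have := hm x
  omega

lemma sum_card_layer {N : ℕ} (hN : ∀ x, weightedHeight m x ≤ N) :
    ∑ s ∈ Icc 1 N, #(layer m s) = ∑ x, m x := by
  simp only [layer, card_filter]
  rw [sum_comm]
  refine sum_congr rfl fun x _ => ?_
  rw [← card_filter]
  convert Nat.card_Ioc (weightedHeight m x - m x) (weightedHeight m x) using 2
  · ext s
    simp only [mem_filter, mem_Icc, mem_Ioc]
    have := hN x
    omega
  · have := le_weightedHeight m x
    omega

end Layers

lemma sum_Icc_one_two_mul_add_one {M : Type*} [AddCommMonoid M] (f : ℕ → M) (k : ℕ) :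
    ∑ s ∈ Icc 1 (2 * k + 1), f s =
      ∑ i ∈ range (k + 1), f (2 * i + 1) + ∑ i ∈ range k, f (2 * i + 2) := by
  induction k with
  | zero => simp
  | succ k ih =>
    rw [show 2 * (k + 1) + 1 = 2 * k + 1 + 1 + 1 by ring, sum_Icc_succ_top (by omega),
      sum_Icc_succ_top (by omega), ih, sum_range_succ (fun i => f (2 * i + 1)) (k + 1),
      sum_range_succ (fun i => f (2 * i + 2)) k,
      show 2 * k + 1 + 1 + 1 = 2 * (k + 1) + 1 by ring, show 2 * k + 1 + 1 = 2 * k + 2 by ring]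
    abel

lemma card_inter_biUnion_le_of_isChain {α ι : Type*} [PartialOrder α] [DecidableEq α] [Fintype ι]
    {s : Finset α} (hs : IsChain (· ≤ ·) (s : Set α)) {f : ι → Finset α}
    (hf : ∀ i, IsAntichain (· ≤ ·) (f i : Set α)) :
    #(s ∩ univ.biUnion f) ≤ Fintype.card ι := by
  rw [inter_biUnion]
  calc #(univ.biUnion fun i => s ∩ f i) ≤ ∑ i, #(s ∩ f i) := card_biUnion_le
    _ ≤ ∑ _i : ι, 1 := sum_le_sum fun i _ => card_le_one.2 fun x hx y hy =>
        inter_subsingleton_of_isChain_of_isAntichain hs (hf i) (by simpa using hx)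
          (by simpa using hy)
    _ = Fintype.card ι := by simp

def IsAntichainFamily {α : Type*} [PartialOrder α] {k : ℕ} (f : Fin k → Finset α) : Prop :=
  (∀ i, IsAntichain (· ≤ ·) (f i : Set α)) ∧ Pairwise (Function.onFun Disjoint f)

section AntichainFamily

variable {α : Type*} [PartialOrder α] [Fintype α] [DecidableEq α]

variable (α) in
lemma bddAbove_card_biUnion_antichainFamily (k : ℕ) :
    BddAbove {n : ℕ | ∃ f : Fin k → Finset α, (∀ i, IsAntichain (· ≤ ·) (↑(f i) : Set α)) ∧
      Pairwise (Function.onFun Disjoint f) ∧ n = #(univ.biUnion f)} :=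
  ⟨Fintype.card α, by rintro n ⟨f, -, -, rfl⟩; exact card_le_univ _⟩

lemma card_biUnion_le_aMax {k : ℕ} {f : Fin k → Finset α} (hf : IsAntichainFamily f) :
    #(univ.biUnion f) ≤ aMax α k :=
  le_csSup (bddAbove_card_biUnion_antichainFamily α k) ⟨f, hf.1, hf.2, rfl⟩

lemma exists_isAntichainFamily_card_eq_aMax (k : ℕ) :
    ∃ f : Fin k → Finset α, IsAntichainFamily f ∧ #(univ.biUnion f) = aMax α k := by
  obtain ⟨f, hf₁, hf₂, hcard⟩ := Nat.sSup_mem (s := {n : ℕ | ∃ f : Fin k → Finset α,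
      (∀ i, IsAntichain (· ≤ ·) (↑(f i) : Set α)) ∧ Pairwise (Function.onFun Disjoint f) ∧
      n = #(univ.biUnion f)})
    ⟨0, fun _ => ∅, fun _ => by rw [coe_empty]; exact Set.subsingleton_empty.isAntichain _,
      fun _ _ _ => disjoint_bot_left,
      (card_eq_zero.2 (subset_empty.1 (biUnion_subset.2 fun _ _ => subset_rfl))).symm⟩
    (bddAbove_card_biUnion_antichainFamily α k)
  exact ⟨f, ⟨hf₁, hf₂⟩, hcard.symm⟩

end AntichainFamily

section Merge

variable {α : Type*} [PartialOrder α] [Fintype α]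

noncomputable def alternateLayers (m : α → ℕ) (c n : ℕ) : Fin n → Finset α :=
  fun i => layer m (2 * i + c)

lemma isAntichainFamily_alternateLayers {m : α → ℕ} (hm : ∀ x, m x ≤ 2) (c n : ℕ) :
    IsAntichainFamily (alternateLayers m c n) := by
  refine ⟨fun i => isAntichain_layer m _, fun i j hij => ?_⟩
  rcases lt_or_gt_of_ne hij with h | h
  · exact disjoint_layer m hm (by simp only [Fin.lt_def] at h; omega)
  · exact (disjoint_layer m hm (by simp only [Fin.lt_def] at h; omega)).symm

lemma card_alternateLayers_add_card_alternateLayers [DecidableEq α] {m : α → ℕ} {k : ℕ}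
    (hm : ∀ x, m x ≤ 2)
    (hchain : ∀ s : Finset α, IsChain (· ≤ ·) (s : Set α) → ∑ y ∈ s, m y ≤ 2 * k + 1) :
    #(univ.biUnion (alternateLayers m 1 (k + 1))) + #(univ.biUnion (alternateLayers m 2 k)) =
      ∑ x, m x := by
  have hcard (c n : ℕ) :
      #(univ.biUnion (alternateLayers m c n)) = ∑ i ∈ range n, #(layer m (2 * i + c)) := by
    rw [card_biUnion fun i _ j _ hij => (isAntichainFamily_alternateLayers hm c n).2 hij]
    exact Fin.sum_univ_eq_sum_range (fun i => #(layer m (2 * i + c))) n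
  rw [hcard, hcard, ← sum_Icc_one_two_mul_add_one (fun s => #(layer m s)),
    sum_card_layer m (weightedHeight_le m hchain)]

end Merge

section PairCount

variable {α : Type*} [DecidableEq α]

def pairCount (X Y : Finset α) (x : α) : ℕ :=
  (if x ∈ X then 1 else 0) + (if x ∈ Y then 1 else 0)

lemma pairCount_le_two (X Y : Finset α) (x : α) : pairCount X Y x ≤ 2 := by
  unfold pairCount
  split_ifs <;> omega

lemma sum_pairCount (X Y s : Finset α) : ∑ x ∈ s, pairCount X Y x = #(s ∩ X) + #(s ∩ Y) := by
  simp only [pairCount, sum_add_distrib, ← card_filter, filter_mem_eq_inter]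

lemma sum_pairCount_biUnion_le_of_isChain [PartialOrder α] {a b : ℕ} {F : Fin a → Finset α}
    {G : Fin b → Finset α} (hF : ∀ i, IsAntichain (· ≤ ·) (F i : Set α))
    (hG : ∀ i, IsAntichain (· ≤ ·) (G i : Set α)) {s : Finset α}
    (hs : IsChain (· ≤ ·) (s : Set α)) :
    ∑ y ∈ s, pairCount (univ.biUnion F) (univ.biUnion G) y ≤ a + b := by
  rw [sum_pairCount]
  simpa using add_le_add (card_inter_biUnion_le_of_isChain hs hF)
    (card_inter_biUnion_le_of_isChain hs hG)

end PairCount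

lemma mem_biUnion_of_card_eq_aMax_succ {α : Type*} [PartialOrder α] [Fintype α] [DecidableEq α]
    {p : α} (hp : IsMin p) {k : ℕ}
    (hcov : ∀ g : Fin k → Finset α, IsAntichainFamily g → #(univ.biUnion g) = aMax α k →
      p ∈ univ.biUnion g)
    {f : Fin (k + 1) → Finset α} (hf : IsAntichainFamily f)
    (hcard : #(univ.biUnion f) = aMax α (k + 1)) : p ∈ univ.biUnion f := by
  by_contra hpf
  obtain ⟨g, hg, hgcard⟩ := exists_isAntichainFamily_card_eq_aMax (α := α) k
  set m := pairCount (univ.biUnion f) (univ.biUnion g)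
  have hm : ∀ x, m x ≤ 2 := pairCount_le_two _ _
  have hmerge := card_alternateLayers_add_card_alternateLayers hm
    fun s hs => (sum_pairCount_biUnion_le_of_isChain hf.1 hg.1 hs).trans_eq (by ring)
  rw [sum_pairCount, univ_inter, univ_inter] at hmerge
  have hodd := card_biUnion_le_aMax (isAntichainFamily_alternateLayers hm 1 (k + 1))
  have heven := card_biUnion_le_aMax (isAntichainFamily_alternateLayers hm 2 k)
  obtain ⟨j, -, hj⟩ := mem_biUnion.1 <|
    hcov _ (isAntichainFamily_alternateLayers hm 2 k) (by omega)
  -- `p` is minimal and `m p = 1`, so it occupies only level `1`, which is odd.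
  have hpm : m p = 1 := by simp [m, pairCount, hpf, hcov g hg hgcard]
  simp only [alternateLayers, layer, mem_filter, weightedHeight_eq_of_isMin m hp, hpm] at hj
  omega

theorem maximal_antichain_families_keep_covering
    (α : Type*) [PartialOrder α] [Fintype α] [DecidableEq α]
    (p : α) (hp : ∀ x : α, x ≤ p → x = p) (k : ℕ)
    (hcov : ∀ f : Fin k → Finset α,
      (∀ i, IsAntichain (· ≤ ·) (↑(f i) : Set α)) →
      Pairwise (Function.onFun Disjoint f) →
      (Finset.univ.biUnion f).card = aMax α k →
      p ∈ Finset.univ.biUnion f) :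
    ∀ k' : ℕ, k ≤ k' → ∀ f : Fin k' → Finset α,
      (∀ i, IsAntichain (· ≤ ·) (↑(f i) : Set α)) →
      Pairwise (Function.onFun Disjoint f) →
      (Finset.univ.biUnion f).card = aMax α k' →
      p ∈ Finset.univ.biUnion f := by
  intro k' hk'
  induction k', hk' using Nat.le_induction with
  | base => exact hcov
  | succ n _ ih =>
    exact fun f hf₁ hf₂ hcard => mem_biUnion_of_card_eq_aMax_succ (fun x hx => (hp x hx).ge)
      (fun g hg => ih g hg.1 hg.2) ⟨hf₁, hf₂⟩ hcard
end

section
/- Let P be a finite poset of cardinality n, C = {C_1,...,C_l} a family of l pairwise disjoint chains, and A = {A_1,...,A_k} a family of k pairwise disjoint antichains. Then Σ|C_i| + Σ|A_j| ≤ n + kl, with equality if and only if C and A are orthogonal, i.e., the chains and antichains together cover P and every C_i meets every A_j. -/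
/-!
By inclusion–exclusion, `∑ |C_i| + ∑ |A_j| = |⋃ C ∪ ⋃ A| + |⋃ C ∩ ⋃ A|`. The first term is at
most `n`, with equality iff the families cover `P`. Since the chains and the antichains are each
pairwise disjoint, the second term is `∑_{i,j} |C_i ∩ A_j|`; a chain meets an antichain in at most
one point, so it is at most `kl`, with equality iff every `C_i` meets every `A_j`.
-/

open Finset

theorem Finset.card_inter_le_one_of_isChain_of_isAntichain {α : Type*} [DecidableEq α]
    {r : α → α → Prop} {s t : Finset α} (hs : IsChain r (s : Set α))
    (ht : IsAntichain r (t : Set α)) : #(s ∩ t) ≤ 1 := by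
  rw [card_le_one_iff_subsingleton, coe_inter]
  exact inter_subsingleton_of_isChain_of_isAntichain hs ht

section DisjointFamilies

variable {α ι κ : Type*} [DecidableEq α] [Fintype ι] [Fintype κ]
  {C : ι → Finset α} {A : κ → Finset α}

theorem Finset.card_biUnion_inter_biUnion (hC : Pairwise (Function.onFun Disjoint C))
    (hA : Pairwise (Function.onFun Disjoint A)) :
    #(univ.biUnion C ∩ univ.biUnion A) = ∑ p : ι × κ, #(C p.1 ∩ A p.2) := by
  rw [biUnion_inter, Fintype.sum_prod_type,
    card_biUnion fun i _ i' _ hi ↦ (hC hi).mono inter_subset_left inter_subset_left]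
  refine sum_congr rfl fun i _ ↦ ?_
  rw [inter_biUnion,
    card_biUnion fun j _ j' _ hj ↦ (hA hj).mono inter_subset_right inter_subset_right]

theorem Finset.sum_card_add_sum_card_eq_card_union_add_sum_card_inter
    (hC : Pairwise (Function.onFun Disjoint C)) (hA : Pairwise (Function.onFun Disjoint A)) :
    ∑ i, #(C i) + ∑ j, #(A j) =
      #(univ.biUnion C ∪ univ.biUnion A) + ∑ p : ι × κ, #(C p.1 ∩ A p.2) := by
  rw [← card_biUnion_inter_biUnion hC hA, card_union_add_card_inter,
    card_biUnion fun i _ i' _ hi ↦ hC hi, card_biUnion fun j _ j' _ hj ↦ hA hj]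

variable [PartialOrder α] (hC : ∀ i, IsChain (· ≤ ·) (C i : Set α))
  (hA : ∀ j, IsAntichain (· ≤ ·) (A j : Set α))
include hC hA

theorem sum_card_inter_chain_antichain_le :
    ∑ p : ι × κ, #(C p.1 ∩ A p.2) ≤ Fintype.card ι * Fintype.card κ := by
  simpa using sum_le_card_nsmul univ _ 1 fun (p : ι × κ) _ ↦
    card_inter_le_one_of_isChain_of_isAntichain (hC p.1) (hA p.2)

theorem sum_card_inter_chain_antichain_eq_iff :
    ∑ p : ι × κ, #(C p.1 ∩ A p.2) = Fintype.card ι * Fintype.card κ ↔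
      ∀ i j, (C i ∩ A j).Nonempty := by
  have hle (p : ι × κ) : #(C p.1 ∩ A p.2) ≤ 1 :=
    card_inter_le_one_of_isChain_of_isAntichain (hC p.1) (hA p.2)
  have hsum := sum_eq_sum_iff_of_le (s := univ) fun p _ ↦ hle p
  simp only [sum_const, card_univ, Fintype.card_prod, smul_eq_mul, mul_one, mem_univ,
    forall_const, Prod.forall] at hsum
  rw [hsum]
  refine forall₂_congr fun i j ↦ ?_
  rw [← card_pos]
  exact Nat.le_antisymm_iff.trans (and_iff_right (hle (i, j)))

end DisjointFamilies

theorem orthogonality_inequality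
    (α : Type*) [PartialOrder α] [Fintype α] [DecidableEq α]
    (l k : ℕ) (C : Fin l → Finset α) (A : Fin k → Finset α)
    (hC : ∀ i, IsChain (· ≤ ·) (↑(C i) : Set α))
    (hCd : Pairwise (Function.onFun Disjoint C))
    (hA : ∀ j, IsAntichain (· ≤ ·) (↑(A j) : Set α))
    (hAd : Pairwise (Function.onFun Disjoint A)) :
    ((∑ i, (C i).card) + ∑ j, (A j).card ≤ Fintype.card α + k * l) ∧
    ((∑ i, (C i).card) + ∑ j, (A j).card = Fintype.card α + k * l ↔
      (Finset.univ.biUnion C ∪ Finset.univ.biUnion A = Finset.univ ∧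
       ∀ i j, (C i ∩ A j).Nonempty)) := by
  rw [sum_card_add_sum_card_eq_card_union_add_sum_card_inter hCd hAd, ← card_eq_iff_eq_univ,
    ← sum_card_inter_chain_antichain_eq_iff hC hA]
  have hcover := card_le_univ (univ.biUnion C ∪ univ.biUnion A)
  have hmeet := sum_card_inter_chain_antichain_le hC hA
  simp only [Fintype.card_fin, mul_comm l k] at hmeet ⊢
  omega
end

section
/- Let C and A be orthogonal chain and antichain families in a finite poset P, with C = {C_1,...,C_l} and A = {A_1,...,A_k}. Let 𝒞⁺ be the chain partition consisting of C together with the elements of P not covered by C as singleton chains. Then 𝒞⁺ is k-saturated: a_k(P) = Σ_{C ∈ 𝒞⁺} min{|C|, k}. -/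
open Finset

lemma antichain_inter_chain_card_le_one {α : Type*} [PartialOrder α] [DecidableEq α]
    (a c : Finset α) (ha : IsAntichain (· ≤ ·) (↑a : Set α))
    (hc : IsChain (· ≤ ·) (↑c : Set α)) : (a ∩ c).card ≤ 1 := by
  refine Finset.card_le_one.2 fun x hx y hy => ?_
  simp only [Finset.mem_inter] at hx hy
  by_contra hne
  rcases hc hx.2 hy.2 hne with h | h
  · exact ha hx.1 hy.1 hne h
  · exact ha hy.1 hx.1 (Ne.symm hne) h

theorem orthogonal_gives_saturated_partition
    (α : Type*) [PartialOrder α] [Fintype α] [DecidableEq α]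
    (l k : ℕ) (C : Fin l → Finset α) (A : Fin k → Finset α)
    (hC : ∀ i, IsChain (· ≤ ·) (↑(C i) : Set α))
    (hCd : Pairwise (Function.onFun Disjoint C))
    (hA : ∀ j, IsAntichain (· ≤ ·) (↑(A j) : Set α))
    (hAd : Pairwise (Function.onFun Disjoint A))
    (hcover : Finset.univ.biUnion C ∪ Finset.univ.biUnion A = Finset.univ)
    (hmeet : ∀ i j, (C i ∩ A j).Nonempty) :
    aMax α k = (∑ i, min (C i).card k) +
      (Finset.univ \ Finset.univ.biUnion C).card * min 1 k := by
  classical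
  set S := Finset.univ.biUnion C with hS
  have bdd : BddAbove {n : ℕ | ∃ f : Fin k → Finset α,
      (∀ i, IsAntichain (· ≤ ·) (↑(f i) : Set α)) ∧
      Pairwise (Function.onFun Disjoint f) ∧
      n = (Finset.univ.biUnion f).card} := by
    refine ⟨Fintype.card α, fun n hn => ?_⟩
    obtain ⟨f, -, -, rfl⟩ := hn
    exact Finset.card_le_univ _
  rcases Nat.eq_zero_or_pos k with rfl | hk
  · have h0 : aMax α 0 = 0 := by
      refine Nat.le_zero.1 ?_
      unfold aMax
      refine csSup_le ⟨0, Fin.elim0, fun i => i.elim0, fun i => i.elim0, by simp⟩ ?_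
      rintro n ⟨f, -, -, rfl⟩
      simp
    simp [h0]
  have hmin1 : min 1 k = 1 := Nat.min_eq_left hk
  rw [hmin1, mul_one]
  have hTA : ∀ x : α, x ∉ S → x ∈ Finset.univ.biUnion A := by
    intro x hx
    have hx2 : x ∈ S ∪ Finset.univ.biUnion A := by rw [hcover]; exact Finset.mem_univ x
    rcases Finset.mem_union.1 hx2 with h | h
    · exact absurd h hx
    · exact h
  have key_up : aMax α k ≤ (∑ i, min (C i).card k) + (Finset.univ \ S).card := by
    unfold aMax
    refine csSup_le ⟨_, A, hA, hAd, rfl⟩ ?_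
    rintro n ⟨f, hf, hfd, rfl⟩
    set F := Finset.univ.biUnion f with hF
    have hsplit : F ⊆ Finset.univ.biUnion (fun i => F ∩ C i) ∪ (F ∩ (Finset.univ \ S)) := by
      intro x hx
      by_cases hxS : x ∈ S
      · obtain ⟨i, -, hi⟩ := Finset.mem_biUnion.1 hxS
        exact Finset.mem_union_left _
          (Finset.mem_biUnion.2 ⟨i, Finset.mem_univ i, Finset.mem_inter.2 ⟨hx, hi⟩⟩)
      · exact Finset.mem_union_right _
          (Finset.mem_inter.2 ⟨hx, Finset.mem_sdiff.2 ⟨Finset.mem_univ x, hxS⟩⟩)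
    calc F.card ≤ (Finset.univ.biUnion (fun i => F ∩ C i) ∪ (F ∩ (Finset.univ \ S))).card :=
          Finset.card_le_card hsplit
      _ ≤ (Finset.univ.biUnion (fun i => F ∩ C i)).card + (F ∩ (Finset.univ \ S)).card :=
          Finset.card_union_le _ _
      _ ≤ (∑ i, (F ∩ C i).card) + (Finset.univ \ S).card :=
          add_le_add Finset.card_biUnion_le (Finset.card_le_card Finset.inter_subset_right)
      _ ≤ (∑ i, min (C i).card k) + (Finset.univ \ S).card := by
          refine Nat.add_le_add_right (Finset.sum_le_sum fun i _ => ?_) _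
          have h1 : (F ∩ C i).card ≤ (C i).card :=
            Finset.card_le_card Finset.inter_subset_right
          have h2 : (F ∩ C i).card ≤ k := by
            have heq : F ∩ C i = Finset.univ.biUnion (fun j => f j ∩ C i) := by
              rw [hF, Finset.biUnion_inter]
            rw [heq]
            calc (Finset.univ.biUnion (fun j => f j ∩ C i)).card
                ≤ ∑ j, (f j ∩ C i).card := Finset.card_biUnion_le
              _ ≤ ∑ _j : Fin k, 1 :=
                  Finset.sum_le_sum fun j _ =>
                    antichain_inter_chain_card_le_one _ _ (hf j) (hC i)
              _ = k := by simp
          omega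
  have key_low : (∑ i, min (C i).card k) + (Finset.univ \ S).card ≤ aMax α k := by
    have hmem : (Finset.univ.biUnion A).card ∈ {n : ℕ | ∃ f : Fin k → Finset α,
        (∀ i, IsAntichain (· ≤ ·) (↑(f i) : Set α)) ∧
        Pairwise (Function.onFun Disjoint f) ∧
        n = (Finset.univ.biUnion f).card} := ⟨A, hA, hAd, rfl⟩
    have hle : (∑ i, min (C i).card k) + (Finset.univ \ S).card ≤
        (Finset.univ.biUnion A).card := by
      set U := (Finset.univ \ S) ∪
        Finset.univ.biUnion (fun i => C i ∩ Finset.univ.biUnion A) with hU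
      have hUsub : U ⊆ Finset.univ.biUnion A := by
        intro x hx
        rcases Finset.mem_union.1 hx with hx | hx
        · exact hTA x (Finset.mem_sdiff.1 hx).2
        · obtain ⟨i, -, hi⟩ := Finset.mem_biUnion.1 hx
          exact (Finset.mem_inter.1 hi).2
      have hdisj : Disjoint (Finset.univ \ S)
          (Finset.univ.biUnion fun i => C i ∩ Finset.univ.biUnion A) := by
        rw [Finset.disjoint_left]
        intro x hx hx2
        obtain ⟨i, -, hi⟩ := Finset.mem_biUnion.1 hx2
        exact (Finset.mem_sdiff.1 hx).2
          (Finset.mem_biUnion.2 ⟨i, Finset.mem_univ i, (Finset.mem_inter.1 hi).1⟩)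
      have hpw : ∀ i ∈ (Finset.univ : Finset (Fin l)), ∀ j ∈ Finset.univ, i ≠ j →
          Disjoint (C i ∩ Finset.univ.biUnion A) (C j ∩ Finset.univ.biUnion A) :=
        fun i _ j _ hij =>
          (hCd hij).mono Finset.inter_subset_left Finset.inter_subset_left
      have hcard : U.card = (Finset.univ \ S).card +
          ∑ i, (C i ∩ Finset.univ.biUnion A).card := by
        rw [hU, Finset.card_union_of_disjoint hdisj, Finset.card_biUnion hpw]
      have hki : ∀ i, k ≤ (C i ∩ Finset.univ.biUnion A).card := by
        intro i
        choose g hg using fun j => hmeet i j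
        have hginj : Function.Injective g := by
          intro j j' hjj'
          by_contra hne
          have hd := hAd hne
          have h1 : g j ∈ A j := (Finset.mem_inter.1 (hg j)).2
          have h2 : g j ∈ A j' := by
            rw [hjj']; exact (Finset.mem_inter.1 (hg j')).2
          exact Finset.disjoint_left.1 hd h1 h2
        calc k = (Finset.univ : Finset (Fin k)).card := by simp
          _ ≤ (C i ∩ Finset.univ.biUnion A).card := by
              refine Finset.card_le_card_of_injOn g (fun j _ => ?_) hginj.injOn
              refine Finset.mem_inter.2 ⟨(Finset.mem_inter.1 (hg j)).1, ?_⟩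
              exact Finset.mem_biUnion.2 ⟨j, Finset.mem_univ j, (Finset.mem_inter.1 (hg j)).2⟩
      have hsum : ∑ i, min (C i).card k ≤ ∑ i, (C i ∩ Finset.univ.biUnion A).card :=
        Finset.sum_le_sum fun i _ => le_trans (min_le_right _ _) (hki i)
      have hUle : U.card ≤ (Finset.univ.biUnion A).card := Finset.card_le_card hUsub
      omega
    exact hle.trans (le_csSup bdd hmem)
  omega
end
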